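/- arXiv:1308.0065 — 3 statements merged into one kernel-verified Lean document; each statement's English description precedes it below -/
import Mathlib

section
/- If n is a positive integer with c(n) ≠ 0, where c(n) are the Dirichlet coefficients of ∏_{χ mod q} L(s,χ), then n = A·B with gcd(A,B)=1, A squarefull (every prime dividing A divides A at least twice), B squarefree, and every prime factor of B congruent to 1 modulo q. -/
/-!
Since no `L(s, χ)` vanishes for `Re s > 1`, the series `∑ c(n) n⁻ˢ` converges somewhere, so by
uniqueness of Dirichlet coefficients `c` agrees on `n ≥ 1` with the multiplicative function
`F = ∏_χ χ` (Dirichlet convolution). By orthogonality of characters, `F p = ∑_χ χ p` is `φ(q)`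
when `p ≡ 1 [MOD q]` and `0` otherwise. As `F n = ∏_p F (p ^ vₚ(n))`, a nonzero `c n` forces every
prime dividing `n` exactly once to be `≡ 1 [MOD q]`; take `B` to be the product of these primes.
-/

open LSeries ArithmeticFunction
open scoped LSeries.notation

namespace ArithmeticFunction

theorem IsMultiplicative.prod {R ι : Type*} [CommSemiring R] (t : Finset ι)
    {f : ι → ArithmeticFunction R} (hf : ∀ i ∈ t, (f i).IsMultiplicative) :
    (∏ i ∈ t, f i).IsMultiplicative :=
  Finset.prod_induction _ _ (fun _ _ ↦ IsMultiplicative.mul) isMultiplicative_one hf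

theorem IsMultiplicative.mul_apply_prime {R : Type*} [CommSemiring R]
    {f g : ArithmeticFunction R} (hf : f.IsMultiplicative) (hg : g.IsMultiplicative)
    {p : ℕ} (hp : p.Prime) : (f * g) p = f p + g p := by
  rw [mul_apply, Nat.sum_divisorsAntidiagonal (fun x y ↦ f x * g y), hp.divisors,
    Finset.sum_pair hp.one_lt.ne, Nat.div_one, Nat.div_self hp.pos, hf.map_one, hg.map_one,
    one_mul, mul_one, add_comm]

theorem IsMultiplicative.prod_apply_prime {R ι : Type*} [CommSemiring R] (t : Finset ι)
    {f : ι → ArithmeticFunction R} (hf : ∀ i ∈ t, (f i).IsMultiplicative)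
    {p : ℕ} (hp : p.Prime) : (∏ i ∈ t, f i) p = ∑ i ∈ t, f i p := by
  classical
  induction t using Finset.induction_on with
  | empty => simp [hp.ne_one]
  | insert a t ha ih =>
    rw [Finset.forall_mem_insert] at hf
    rw [Finset.prod_insert ha, Finset.sum_insert ha,
      hf.1.mul_apply_prime (.prod t hf.2) hp, ih hf.2]

theorem IsMultiplicative.map_ordProj_ne_zero {R : Type*} [MonoidWithZero R]
    {f : ArithmeticFunction R} (hf : f.IsMultiplicative) {n : ℕ} (hfn : f n ≠ 0)
    {p : ℕ} (hp : p.Prime) : f (p ^ n.factorization p) ≠ 0 := by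
  have hn : n ≠ 0 := by rintro rfl; exact hfn f.map_zero
  rw [← Nat.ordProj_mul_ordCompl_eq_self n p,
    hf.map_mul_of_coprime ((Nat.coprime_ordCompl hp hn).pow_left _)] at hfn
  exact left_ne_zero_of_mul hfn

theorem LSeriesSummable_prod {ι : Type*} (t : Finset ι) {f : ι → ArithmeticFunction ℂ}
    {s : ℂ} (hf : ∀ i ∈ t, LSeriesSummable ↗(f i) s) :
    LSeriesSummable ↗(∏ i ∈ t, f i) s := by
  classical
  induction t using Finset.induction_on with
  | empty =>
    rw [Finset.prod_empty, one_eq_delta]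
    exact summable_of_ne_finset_zero (s := {1}) fun n hn ↦ by simp_all [term_delta]
  | insert a t ha ih =>
    rw [Finset.forall_mem_insert] at hf
    rw [Finset.prod_insert ha]
    exact LSeriesSummable_mul hf.1 (ih hf.2)

theorem LSeries_prod {ι : Type*} (t : Finset ι) {f : ι → ArithmeticFunction ℂ}
    {s : ℂ} (hf : ∀ i ∈ t, LSeriesSummable ↗(f i) s) :
    LSeries ↗(∏ i ∈ t, f i) s = ∏ i ∈ t, LSeries ↗(f i) s := by
  classical
  induction t using Finset.induction_on with
  | empty => rw [Finset.prod_empty, Finset.prod_empty, one_eq_delta, LSeries_delta, Pi.one_apply]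
  | insert a t ha ih =>
    rw [Finset.forall_mem_insert] at hf
    rw [Finset.prod_insert ha, Finset.prod_insert ha,
      LSeries_mul' hf.1 (LSeriesSummable_prod t hf.2), ih hf.2]

end ArithmeticFunction

namespace Nat

theorem exists_squarefull_mul_squarefree {n : ℕ} (hn : n ≠ 0) :
    ∃ A B : ℕ, n = A * B ∧ A.Coprime B ∧ (∀ p : ℕ, p.Prime → p ∣ A → p ^ 2 ∣ A) ∧
      Squarefree B ∧ ∀ p : ℕ, p.Prime → p ∣ B → n.factorization p = 1 := by
  classical
  set f := n.factorization
  set A := (f.filter fun p ↦ f p ≠ 1).prod (· ^ ·)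
  set B := (f.filter fun p ↦ f p = 1).prod (· ^ ·)
  have filter_le (P : ℕ → Prop) [DecidablePred P] : f.filter P ≤ f := fun p ↦ by
    rw [Finsupp.filter_apply]; split_ifs <;> simp
  have hA : A.factorization = f.filter fun p ↦ f p ≠ 1 :=
    factorization_prod_pow_eq_self_of_le_factorization (filter_le _)
  have hB : B.factorization = f.filter fun p ↦ f p = 1 :=
    factorization_prod_pow_eq_self_of_le_factorization (filter_le _)
  have hAB : n = A * B := by
    rw [mul_comm, Finsupp.prod_filter_mul_prod_filter_not, prod_factorization_pow_eq_self hn]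
  obtain ⟨hA0, hB0⟩ : A ≠ 0 ∧ B ≠ 0 := mul_ne_zero_iff.mp (hAB ▸ hn)
  have two_le_of_dvd_A {p : ℕ} (hp : p.Prime) (h : p ∣ A) : 2 ≤ f p := by
    have := (hp.dvd_iff_one_le_factorization hA0).mp h
    rw [hA, Finsupp.filter_apply] at this
    split_ifs at this <;> omega
  have eq_one_of_dvd_B {p : ℕ} (hp : p.Prime) (h : p ∣ B) : f p = 1 := by
    have := (hp.dvd_iff_one_le_factorization hB0).mp h
    rw [hB, Finsupp.filter_apply] at this
    split_ifs at this <;> omega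
  refine ⟨A, B, hAB, ?_, ?_, ?_, fun p hp h ↦ eq_one_of_dvd_B hp h⟩
  · refine coprime_of_dvd fun p hp hpA hpB ↦ ?_
    have := two_le_of_dvd_A hp hpA
    have := eq_one_of_dvd_B hp hpB
    omega
  · intro p hp hpA
    rw [hp.pow_dvd_iff_le_factorization hA0, hA, Finsupp.filter_apply, if_pos]
    all_goals have := two_le_of_dvd_A hp hpA; omega
  · rw [squarefree_iff_factorization_le_one hB0, hB]
    intro p
    rw [Finsupp.filter_apply]
    split_ifs <;> omega

end Nat

namespace DirichletCharacter

variable (N : ℕ)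

noncomputable def productCoeff : ArithmeticFunction ℂ :=
  ∏ χ : DirichletCharacter ℂ N, toArithmeticFunction (χ ·)

theorem isMultiplicative_productCoeff : (productCoeff N).IsMultiplicative :=
  .prod _ fun χ _ ↦ isMultiplicative_toArithmeticFunction χ

theorem productCoeff_apply_prime [NeZero N] {p : ℕ} (hp : p.Prime) :
    productCoeff N p = if (p : ZMod N) = 1 then (N.totient : ℂ) else 0 := by
  rw [productCoeff, IsMultiplicative.prod_apply_prime _
    (fun χ _ ↦ isMultiplicative_toArithmeticFunction χ) hp, ← sum_characters_eq]
  exact Finset.sum_congr rfl fun χ _ ↦ (apply_eq_toArithmeticFunction_apply χ hp.ne_zero).symm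

variable {N}

theorem LSeriesSummable_toArithmeticFunction (χ : DirichletCharacter ℂ N) {s : ℂ}
    (hs : 1 < s.re) : LSeriesSummable ↗(toArithmeticFunction (χ ·)) s :=
  (LSeriesSummable_congr s fun hn ↦ apply_eq_toArithmeticFunction_apply χ hn).mp
    (LSeriesSummable_of_one_lt_re χ hs)

theorem LSeries_productCoeff {s : ℂ} (hs : 1 < s.re) :
    LSeries ↗(productCoeff N) s = ∏ χ : DirichletCharacter ℂ N, LSeries ↗χ s := by
  rw [productCoeff, LSeries_prod _ fun χ _ ↦ LSeriesSummable_toArithmeticFunction χ hs]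
  exact Finset.prod_congr rfl fun χ _ ↦
    (LSeries_congr (fun hn ↦ apply_eq_toArithmeticFunction_apply χ hn) s).symm

theorem eq_productCoeff_of_LSeries_eq {c : ℕ → ℂ}
    (hc : ∀ s : ℂ, 1 < s.re → LSeries c s = ∏ χ : DirichletCharacter ℂ N, LSeries ↗χ s)
    {n : ℕ} (hn : n ≠ 0) : c n = productCoeff N n := by
  have hs : 1 < (2 : ℂ).re := by norm_num
  have hF : abscissaOfAbsConv ↗(productCoeff N) < ⊤ :=
    ((LSeriesSummable_prod _ fun χ _ ↦ LSeriesSummable_toArithmeticFunction χ hs)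
      |>.abscissaOfAbsConv_le).trans_lt (EReal.coe_lt_top _)
  -- an L-series converging nowhere vanishes identically, while `∏ L(2, χ) ≠ 0`
  have hc' : abscissaOfAbsConv c < ⊤ := by
    refine lt_top_iff_ne_top.mpr fun htop ↦ ?_
    have := hc 2 hs
    rw [LSeries_eq_zero_of_abscissaOfAbsConv_eq_top htop, Pi.zero_apply, eq_comm,
      Finset.prod_eq_zero_iff] at this
    obtain ⟨χ, -, hχ⟩ := this
    exact LSeries_ne_zero_of_one_lt_re χ hs hχ
  refine LSeries.eq_of_LSeries_eventually_eq hc' hF ?_ hn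
  filter_upwards [Filter.eventually_gt_atTop 1] with x hx
  rw [hc x (by simpa using hx), LSeries_productCoeff (by simpa using hx)]

theorem natCast_eq_one_of_factorization_eq_one [NeZero N] {n : ℕ}
    (hn : productCoeff N n ≠ 0) {p : ℕ} (hp : p.Prime) (hnp : n.factorization p = 1) :
    (p : ZMod N) = 1 := by
  have := (isMultiplicative_productCoeff N).map_ordProj_ne_zero hn hp
  rw [hnp, pow_one, productCoeff_apply_prime N hp] at this
  by_contra h
  exact this (if_neg h)

end DirichletCharacter

theorem support_of_product_of_L_functions (q : ℕ) [NeZero q] (hq : 2 ≤ q)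
    (c : ℕ → ℂ)
    (hc : ∀ s : ℂ, 1 < s.re →
      LSeries c s = ∏ χ : DirichletCharacter ℂ q, LSeries (fun n => χ (n : ZMod q)) s)
    (n : ℕ) (hn : 0 < n) (hcn : c n ≠ 0) :
    ∃ A B : ℕ, n = A * B ∧ Nat.Coprime A B ∧
      (∀ p : ℕ, p.Prime → p ∣ A → p ^ 2 ∣ A) ∧ Squarefree B ∧
      ∀ p : ℕ, p.Prime → p ∣ B → p % q = 1 := by
  rw [DirichletCharacter.eq_productCoeff_of_LSeries_eq hc hn.ne'] at hcn
  obtain ⟨A, B, hAB, hcop, hA, hB, hBfac⟩ := Nat.exists_squarefull_mul_squarefree hn.ne'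
  refine ⟨A, B, hAB, hcop, hA, hB, fun p hp hpB ↦ ?_⟩
  have hp1 := DirichletCharacter.natCast_eq_one_of_factorization_eq_one hcn hp (hBfac p hp hpB)
  rwa [← Nat.cast_one, ZMod.natCast_eq_natCast_iff', Nat.mod_eq_of_lt hq] at hp1
end

section
/- All zeros of the partial sum ζ_{K,X}(s) = ∑_{n ≤ X} a(n) n^{-s} of the Dedekind zeta function of a number field K of degree n₀ lie in a vertical strip α < Re(s) < β, where β depends only on n₀ and α depends only on n₀ and X. -/
/-! An ideal of norm `n` contains `n`, and as a `ℤ`-lattice of rank `n₀` it is determined by the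
images of `n₀` generators in `𝓞 K ⧸ (n)`, a ring with `n ^ n₀` elements;
hence `a(n) ≤ n ^ (n₀ * n₀)`.
For `Re s ≥ n₀ * n₀ + 2` the term `a(1) = 1` dominates all others, as `∑_{n ≥ 2} n⁻² < 1`.
For `Re s` very negative the term of the largest `m ≤ X` with `a(m) ≠ 0` dominates: every `n < m`
satisfies `n ≤ (1 - 1/(X+1)) m`, so its term is smaller by the factor `(1 - 1/(X+1)) ^ (-Re s)`,
which eventually beats the at most `X` competing terms with coefficients at most `X ^ (n₀ * n₀)`. -/

open Finset Module NumberField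

theorem Submodule.exists_fin_finrank_span_range_eq {R M : Type*} [CommRing R] [IsDomain R]
    [IsPrincipalIdealRing R] [AddCommGroup M] [Module R M] [Module.Free R M] [Module.Finite R M]
    (N : Submodule R M) : ∃ v : Fin (finrank R M) → M, span R (Set.range v) = N := by
  let b := Module.finBasis R N
  have hle : finrank R N ≤ finrank R M := Submodule.finrank_le N
  refine ⟨fun i => if h : (i : ℕ) < finrank R N then b ⟨i, h⟩ else 0, le_antisymm ?_ ?_⟩
  · rw [span_le]
    rintro _ ⟨i, rfl⟩
    dsimp only
    split_ifs
    · exact (b _).2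
    · exact N.zero_mem
  · calc N = span R (Set.range (N.subtype ∘ b)) := by
          rw [Set.range_comp, ← Submodule.map_span, b.span_eq, Submodule.map_subtype_top]
      _ ≤ _ := span_mono <| by
          rintro _ ⟨i, rfl⟩
          exact ⟨Fin.castLE hle i, by simp⟩

theorem Ideal.exists_injective_fin_finrank_quotient {R : Type*} [CommRing R] [Module.Free ℤ R]
    [Module.Finite ℤ R] (J : Ideal R) :
    ∃ f : {I : Ideal R // J ≤ I} → Fin (finrank ℤ R) → R ⧸ J, Function.Injective f := by
  choose v hv using fun I : Ideal R => (I.restrictScalars ℤ).exists_fin_finrank_span_range_eq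
  have hle : ∀ I I' : {I : Ideal R // J ≤ I},
      Ideal.Quotient.mk J ∘ v I = Ideal.Quotient.mk J ∘ v I' → I.1 ≤ I'.1 := by
    intro I I' h
    rw [← Submodule.restrictScalars_le ℤ, ← hv, Submodule.span_le]
    rintro _ ⟨i, rfl⟩
    have hJ : v I i - v I' i ∈ J := Ideal.Quotient.eq.mp (congrFun h i)
    have hI' : v I' i ∈ I'.1 := (hv I'.1).le (Submodule.subset_span ⟨i, rfl⟩)
    simpa using I'.1.add_mem (I'.2 hJ) hI'
  exact ⟨fun I => Ideal.Quotient.mk J ∘ v I, fun I I' h =>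
    Subtype.ext (le_antisymm (hle I I' h) (hle I' I h.symm))⟩

theorem Ideal.card_absNorm_eq_one_eq_one {S : Type*} [CommRing S] [IsDedekindDomain S]
    [Module.Free ℤ S] :
    Nat.card {I : Ideal S // absNorm I = 1} = 1 := by
  simp only [Ideal.absNorm_eq_one_iff]
  exact Nat.card_unique

theorem Ideal.card_absNorm_eq_le_pow {S : Type*} [CommRing S] [IsDedekindDomain S] [Module.Free ℤ S]
    [Module.Finite ℤ S] {n : ℕ} (hn : n ≠ 0) :
    Nat.card {I : Ideal S // absNorm I = n} ≤ n ^ (finrank ℤ S * finrank ℤ S) := by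
  set J : Ideal S := span {(n : S)}
  have hJ : Nat.card (S ⧸ J) = n ^ finrank ℤ S := by
    rw [← Submodule.cardQuot_apply, ← absNorm_apply, absNorm_span_natCast]
  have : Finite (S ⧸ J) := Nat.finite_of_card_ne_zero (hJ ▸ pow_ne_zero _ hn)
  obtain ⟨f, hf⟩ := J.exists_injective_fin_finrank_quotient
  let g : {I : Ideal S // absNorm I = n} → {I : Ideal S // J ≤ I} :=
    fun I => ⟨I.1, by simpa only [I.2] using span_singleton_absNorm_le I.1⟩
  calc Nat.card {I : Ideal S // absNorm I = n}
      ≤ Nat.card (Fin (finrank ℤ S) → S ⧸ J) :=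
        Nat.card_le_card_of_injective (f ∘ g) (hf.comp fun I I' h => Subtype.ext congr($h.1))
    _ = n ^ (finrank ℤ S * finrank ℤ S) := by rw [Nat.card_fun, hJ, Nat.card_fin, ← pow_mul]

theorem Finset.sum_ne_zero_of_sum_erase_norm_lt {ι E : Type*} [SeminormedAddCommGroup E]
    [DecidableEq ι] {s : Finset ι} {f : ι → E} {i : ι} (hi : i ∈ s)
    (h : ∑ j ∈ s.erase i, ‖f j‖ < ‖f i‖) : ∑ j ∈ s, f j ≠ 0 := by
  rw [← add_sum_erase s f hi]
  intro h0
  rw [eq_neg_of_add_eq_zero_left h0, norm_neg] at h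
  exact (norm_sum_le _ _).not_gt h

theorem norm_natCast_mul_natCast_cpow_neg (a : ℕ) {n : ℕ} (hn : 0 < n) (s : ℂ) :
    ‖(a : ℂ) * (n : ℂ) ^ (-s)‖ = a * (n : ℝ) ^ (-s.re) := by
  rw [norm_mul, Complex.norm_natCast, Complex.norm_natCast_cpow_of_pos hn, Complex.neg_re]

theorem sum_Ioc_one_inv_sq_le (N : ℕ) : ∑ n ∈ Ioc 1 N, ((n : ℝ) ^ 2)⁻¹ ≤ 1 - (N : ℝ)⁻¹ := by
  induction N with
  | zero => simp
  | succ N ih =>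
    rcases N.eq_zero_or_pos with rfl | hN
    · simp
    rw [sum_Ioc_succ_top hN, Nat.cast_succ]
    have hN' : (0 : ℝ) < N := by exact_mod_cast hN
    have : ((N + 1 : ℝ) ^ 2)⁻¹ ≤ (N : ℝ)⁻¹ - (N + 1 : ℝ)⁻¹ := by
      rw [inv_sub_inv hN'.ne' (by positivity), add_sub_cancel_left, one_div, sq]
      gcongr
      linarith
    linarith

theorem sum_natCast_mul_cpow_neg_ne_zero_of_re_ge {a : ℕ → ℕ} {k N : ℕ} (h1 : a 1 = 1)
    (hle : ∀ n ∈ Icc 1 N, a n ≤ n ^ k) (hN : 1 ≤ N) {s : ℂ} (hs : k + 2 ≤ s.re) :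
    ∑ n ∈ Icc 1 N, (a n : ℂ) * (n : ℂ) ^ (-s) ≠ 0 := by
  refine sum_ne_zero_of_sum_erase_norm_lt (mem_Icc.mpr ⟨le_rfl, hN⟩) ?_
  have hterm : ∀ n ∈ Ioc 1 N, ‖(a n : ℂ) * (n : ℂ) ^ (-s)‖ ≤ ((n : ℝ) ^ 2)⁻¹ := by
    intro n hn
    obtain ⟨hn1, hnN⟩ := mem_Ioc.mp hn
    have hn0 : (1 : ℝ) ≤ n := by exact_mod_cast hn1.le
    rw [norm_natCast_mul_natCast_cpow_neg _ (by omega)]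
    calc (a n : ℝ) * (n : ℝ) ^ (-s.re)
        ≤ (n : ℝ) ^ (k : ℝ) * (n : ℝ) ^ (-s.re) := by
          gcongr
          exact_mod_cast hle n (mem_Icc.mpr ⟨hn1.le, hnN⟩)
      _ = (n : ℝ) ^ ((k : ℝ) - s.re) := by rw [← Real.rpow_add (by positivity), sub_eq_add_neg]
      _ ≤ (n : ℝ) ^ (-2 : ℝ) := Real.rpow_le_rpow_of_exponent_le hn0 (by linarith)
      _ = ((n : ℝ) ^ 2)⁻¹ := by rw [Real.rpow_neg (by positivity)]; norm_cast
  rw [Icc_erase_left, h1, norm_natCast_mul_natCast_cpow_neg _ one_pos]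
  calc ∑ n ∈ Ioc 1 N, ‖(a n : ℂ) * (n : ℂ) ^ (-s)‖
      ≤ 1 - (N : ℝ)⁻¹ := (sum_le_sum hterm).trans (sum_Ioc_one_inv_sq_le N)
    _ < (1 : ℕ) * ((1 : ℕ) : ℝ) ^ (-s.re) := by
      have : (0 : ℝ) < (N : ℝ)⁻¹ := by positivity
      simpa using this

theorem natCast_le_mul_of_lt_of_le {n m N : ℕ} (hnm : n < m) (hmN : m ≤ N) :
    (n : ℝ) ≤ (1 - ((N : ℝ) + 1)⁻¹) * m := by
  have hn : (n : ℝ) ≤ m - 1 := by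
    rw [le_sub_iff_add_le]; exact_mod_cast hnm
  have hm : (m : ℝ) * ((N : ℝ) + 1)⁻¹ ≤ 1 := by
    rw [← div_eq_mul_inv, div_le_one (by positivity)]
    exact_mod_cast hmN.trans N.le_succ
  linarith [show (1 - ((N : ℝ) + 1)⁻¹) * m = m - m * ((N : ℝ) + 1)⁻¹ by ring]

theorem exists_sum_natCast_mul_cpow_neg_ne_zero_of_re_le (N B : ℕ) :
    ∃ α : ℝ, ∀ a : ℕ → ℕ, (∀ n ∈ Icc 1 N, a n ≤ B) → (∃ n ∈ Icc 1 N, a n ≠ 0) →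
      ∀ s : ℂ, s.re ≤ α → ∑ n ∈ Icc 1 N, (a n : ℂ) * (n : ℂ) ^ (-s) ≠ 0 := by
  set q : ℝ := 1 - ((N : ℝ) + 1)⁻¹
  have hq0 : 0 ≤ q := sub_nonneg.mpr (inv_le_one_of_one_le₀ (by simp))
  have hq1 : q < 1 := sub_lt_self _ (by positivity)
  obtain ⟨k, hk⟩ := exists_pow_lt_of_lt_one (inv_pos.mpr (by positivity : (0 : ℝ) < N * B + 1)) hq1
  refine ⟨-k, fun a ha ⟨n₁, hn₁, ha₁⟩ s hs => ?_⟩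
  set t := -s.re
  have ht : (k : ℝ) ≤ t := by linarith
  have ht0 : 0 ≤ t := k.cast_nonneg.trans ht
  set m := Nat.findGreatest (a · ≠ 0) N
  have hmN : m ≤ N := Nat.findGreatest_le N
  have hm1 : 1 ≤ m := (mem_Icc.mp hn₁).1.trans (Nat.le_findGreatest (mem_Icc.mp hn₁).2 ha₁)
  have ham : a m ≠ 0 := Nat.findGreatest_spec (P := (a · ≠ 0)) (mem_Icc.mp hn₁).2 ha₁
  have hterm : ∀ n ∈ (Icc 1 N).erase m,
      ‖(a n : ℂ) * (n : ℂ) ^ (-s)‖ ≤ B * q ^ k * (m : ℝ) ^ t := by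
    intro n hn
    obtain ⟨hnm, hn⟩ := mem_erase.mp hn
    obtain ⟨hn1, hnN⟩ := mem_Icc.mp hn
    rw [norm_natCast_mul_natCast_cpow_neg _ hn1]
    rcases hnm.lt_or_gt with hlt | hgt
    · calc (a n : ℝ) * (n : ℝ) ^ t
          ≤ B * (q * m) ^ t := by
            gcongr
            · exact_mod_cast ha n hn
            · exact natCast_le_mul_of_lt_of_le hlt hmN
        _ = B * q ^ t * (m : ℝ) ^ t := by rw [Real.mul_rpow hq0 (by positivity), mul_assoc]
        _ ≤ B * q ^ k * (m : ℝ) ^ t := by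
            gcongr
            simpa using Real.rpow_le_rpow_of_exponent_ge' hq0 hq1.le k.cast_nonneg ht
    · rw [not_not.mp (Nat.findGreatest_is_greatest hgt hnN), Nat.cast_zero, zero_mul]
      positivity
  have hNBq : N * (B * q ^ k) < 1 := by
    have hNB : (0 : ℝ) < N * B + 1 := by positivity
    have := mul_lt_mul_of_pos_right hk hNB
    rw [inv_mul_cancel₀ hNB.ne'] at this
    nlinarith [pow_nonneg hq0 k]
  refine sum_ne_zero_of_sum_erase_norm_lt (mem_Icc.mpr ⟨hm1, hmN⟩) ?_
  rw [norm_natCast_mul_natCast_cpow_neg _ hm1]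
  calc ∑ n ∈ (Icc 1 N).erase m, ‖(a n : ℂ) * (n : ℂ) ^ (-s)‖
      ≤ N * (B * q ^ k * (m : ℝ) ^ t) := by
        refine (sum_le_card_nsmul _ _ _ hterm).trans ?_
        rw [nsmul_eq_mul]
        gcongr
        exact_mod_cast (card_erase_le).trans (Nat.card_Icc 1 N).le
    _ < (m : ℝ) ^ t := by
        have : (0 : ℝ) < (m : ℝ) ^ t := by positivity
        nlinarith
    _ ≤ a m * (m : ℝ) ^ t :=
        le_mul_of_one_le_left (by positivity) (by exact_mod_cast Nat.one_le_iff_ne_zero.mpr ham)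

theorem partial_sum_dedekind_zeta_zeros_in_strip (n₀ : ℕ) :
    ∃ β : ℝ, ∀ X : ℝ, 2 ≤ X → ∃ α : ℝ,
      ∀ (K : Type) [Field K] [NumberField K], Module.finrank ℚ K = n₀ →
        ∀ s : ℂ,
          (∑ n ∈ Finset.Icc 1 ⌊X⌋₊,
            (Nat.card {I : Ideal (NumberField.RingOfIntegers K) // Ideal.absNorm I = n} : ℂ) *
              (n : ℂ) ^ (-s)) = 0 →
          α < s.re ∧ s.re < β := by
  refine ⟨n₀ * n₀ + 2, fun X hX => ?_⟩
  set N := ⌊X⌋₊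
  have hN : 1 ≤ N := Nat.le_floor (by norm_num; linarith)
  obtain ⟨α, hα⟩ := exists_sum_natCast_mul_cpow_neg_ne_zero_of_re_le N (N ^ (n₀ * n₀))
  refine ⟨α, fun K _ _ hK s hs => ?_⟩
  have h1 := Ideal.card_absNorm_eq_one_eq_one (S := 𝓞 K)
  have hle : ∀ n ∈ Icc 1 N, Nat.card {I : Ideal (𝓞 K) // Ideal.absNorm I = n} ≤ n ^ (n₀ * n₀) :=
    fun n hn => by
      simpa only [RingOfIntegers.rank, hK] using
        Ideal.card_absNorm_eq_le_pow (S := 𝓞 K) (Nat.one_le_iff_ne_zero.mp (mem_Icc.mp hn).1)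
  constructor
  · by_contra! h
    exact hα _ (fun n hn => (hle n hn).trans (Nat.pow_le_pow_left (mem_Icc.mp hn).2 _))
      ⟨1, mem_Icc.mpr ⟨le_rfl, hN⟩, by rw [h1]; exact one_ne_zero⟩ s h hs
  · by_contra! h
    exact sum_natCast_mul_cpow_neg_ne_zero_of_re_ge h1 hle hN (by exact_mod_cast h) hs
end

section
/- For any δ₀ > 0 there exists n_{δ₀} such that for all n ≥ n_{δ₀}, the divisor function satisfies d(n) ≤ n^{(δ₀ + log 2)/log log n}. -/
/-!
Writing `n = ∏ pᵃᵖ`, we have `log d(n) = ∑ log (aₚ + 1)`. Split the primes at a threshold `y`.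
For `p ≥ y` use `log (a + 1) ≤ a log 2` together with `∑_{p ≥ y} aₚ ≤ log n / log y`; there are
at most `y + 1` primes `p < y`, and each contributes at most `log (log n / log 2 + 1)`.
Taking `y = (log n)^θ` with `θ = 2 log 2 / (2 log 2 + δ) < 1`, the first part is exactly
`(log 2 + δ/2) log n / log log n`, and the second is `O((log n)^θ log log n)`, which is
eventually below `(δ/2) log n / log log n`.
-/

open Real Finset Filter

lemma Nat.log_card_divisors_eq_sum {n : ℕ} (hn : n ≠ 0) :
    Real.log (#n.divisors) = ∑ p ∈ n.primeFactors, Real.log (n.factorization p + 1) := by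
  rw [Nat.card_divisors hn]
  push_cast
  exact log_prod fun p _ => by positivity

lemma Nat.sum_primeFactors_factorization_mul_log (n : ℕ) :
    ∑ p ∈ n.primeFactors, (n.factorization p : ℝ) * Real.log p = Real.log n := by
  rw [log_nat_eq_sum_factorization, Finsupp.sum, Nat.support_factorization]

lemma Nat.factorization_mul_log_nonneg (n p : ℕ) : 0 ≤ (n.factorization p : ℝ) * Real.log p :=
  mul_nonneg (Nat.cast_nonneg _) (log_natCast_nonneg p)

lemma Nat.factorization_le_log_div_log_two {n p : ℕ} (hp : p ∈ n.primeFactors) :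
    (n.factorization p : ℝ) ≤ Real.log n / Real.log 2 := by
  rw [le_div_iff₀ (Real.log_pos one_lt_two)]
  calc (n.factorization p : ℝ) * Real.log 2
      ≤ n.factorization p * Real.log p := by
        gcongr
        exact_mod_cast (Nat.prime_of_mem_primeFactors hp).two_le
    _ ≤ ∑ q ∈ n.primeFactors, (n.factorization q : ℝ) * Real.log q :=
        single_le_sum (fun q _ => factorization_mul_log_nonneg n q) hp
    _ = Real.log n := sum_primeFactors_factorization_mul_log n

lemma Nat.sum_factorization_le_log_div_log (n : ℕ) {y : ℝ} (hy : 1 < y) :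
    ∑ p ∈ n.primeFactors with y ≤ (p : ℕ), (n.factorization p : ℝ) ≤ Real.log n / Real.log y := by
  rw [le_div_iff₀ (Real.log_pos hy), sum_mul]
  calc ∑ p ∈ n.primeFactors with y ≤ (p : ℕ), (n.factorization p : ℝ) * Real.log y
      ≤ ∑ p ∈ n.primeFactors with y ≤ (p : ℕ), (n.factorization p : ℝ) * Real.log p := by
        gcongr with p hp
        exact (mem_filter.1 hp).2
    _ ≤ ∑ p ∈ n.primeFactors, (n.factorization p : ℝ) * Real.log p :=
        sum_le_sum_of_subset_of_nonneg (filter_subset _ _)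
          fun p _ _ => factorization_mul_log_nonneg n p
    _ = Real.log n := sum_primeFactors_factorization_mul_log n

lemma Real.log_natCast_add_one_le_mul_log_two (a : ℕ) : log (a + 1) ≤ a * log 2 := by
  rw [← log_pow]
  exact log_le_log (by positivity) (by exact_mod_cast Nat.lt_two_pow_self)

lemma Finset.card_filter_natCast_lt_le (s : Finset ℕ) {y : ℝ} (hy : 0 ≤ y) :
    (#{p ∈ s | ((p : ℕ) : ℝ) < y} : ℝ) ≤ y + 1 := by
  have hsub : {p ∈ s | ((p : ℕ) : ℝ) < y} ⊆ range ⌈y⌉₊ := fun p hp =>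
    mem_range.2 (Nat.lt_ceil.2 (mem_filter.1 hp).2)
  calc (#{p ∈ s | ((p : ℕ) : ℝ) < y} : ℝ) ≤ #(range ⌈y⌉₊) := by exact_mod_cast card_le_card hsub
    _ ≤ y + 1 := by simpa using (Nat.ceil_lt_add_one hy).le

noncomputable def wigertBound (L y : ℝ) : ℝ :=
  log 2 * (L / log y) + (y + 1) * log (L / log 2 + 1)

theorem log_card_divisors_le_wigertBound {n : ℕ} (hn : n ≠ 0) {y : ℝ} (hy : 1 < y) :
    log (#n.divisors) ≤ wigertBound (log n) y := by
  have hB : 0 ≤ log (log n / log 2 + 1) := log_nonneg (le_add_of_nonneg_left (by positivity))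
  rw [Nat.log_card_divisors_eq_sum hn,
    ← sum_filter_add_sum_filter_not n.primeFactors fun p : ℕ => y ≤ p]
  simp only [not_le]
  apply add_le_add
  · calc ∑ p ∈ n.primeFactors with y ≤ (p : ℕ), log (n.factorization p + 1)
        ≤ ∑ p ∈ n.primeFactors with y ≤ (p : ℕ), (n.factorization p : ℝ) * log 2 :=
          sum_le_sum fun p _ => log_natCast_add_one_le_mul_log_two _
      _ = log 2 * ∑ p ∈ n.primeFactors with y ≤ (p : ℕ), (n.factorization p : ℝ) := by
          rw [← sum_mul, mul_comm]
      _ ≤ log 2 * (log n / log y) := by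
          gcongr
          exact Nat.sum_factorization_le_log_div_log n hy
  · calc ∑ p ∈ n.primeFactors with ((p : ℕ) : ℝ) < y, log (n.factorization p + 1)
        ≤ ∑ p ∈ n.primeFactors with ((p : ℕ) : ℝ) < y, log (log n / log 2 + 1) := by
          gcongr with p hp
          exact Nat.factorization_le_log_div_log_two (mem_filter.1 hp).1
      _ = #{p ∈ n.primeFactors | ((p : ℕ) : ℝ) < y} * log (log n / log 2 + 1) := by
          rw [sum_const, nsmul_eq_mul]
      _ ≤ (y + 1) * log (log n / log 2 + 1) := by
          gcongr
          exact card_filter_natCast_lt_le _ (by linarith)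

lemma Real.log_div_log_two_add_one_le {L : ℝ} (hL : 3 ≤ L) : log (L / log 2 + 1) ≤ 2 * log L := by
  have hL2 : L / log 2 + 1 ≤ L ^ 2 := by
    have : L / log 2 ≤ 2 * L := by
      rw [div_le_iff₀ (log_pos one_lt_two)]
      nlinarith [log_two_gt_d9]
    nlinarith
  calc log (L / log 2 + 1) ≤ log (L ^ 2) := log_le_log (by positivity) hL2
    _ = 2 * log L := by rw [log_pow]; norm_num

lemma eventually_rpow_add_one_mul_log_le {θ c : ℝ} (hθ₀ : 0 ≤ θ) (hθ₁ : θ < 1) (hc : 0 < c) :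
    ∀ᶠ L : ℝ in atTop, (L ^ θ + 1) * log (L / log 2 + 1) ≤ c * (L / log L) := by
  filter_upwards [(isLittleO_log_rpow_rpow_atTop 2 (sub_pos.2 hθ₁)).bound (by positivity : 0 < c / 4),
    eventually_ge_atTop 3] with L hsq hL
  have hlogL : 0 < log L := log_pos (by linarith)
  have hsq : log L ^ 2 ≤ c / 4 * L ^ (1 - θ) := by
    rwa [norm_of_nonneg (by positivity), norm_of_nonneg (by positivity),
      show (2 : ℝ) = (2 : ℕ) by norm_num, rpow_natCast] at hsq
  have h1 : L ^ θ + 1 ≤ 2 * L ^ θ := by linarith [one_le_rpow (by linarith : 1 ≤ L) hθ₀]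
  rw [mul_div_assoc', le_div_iff₀ hlogL]
  calc (L ^ θ + 1) * log (L / log 2 + 1) * log L
      ≤ 2 * L ^ θ * (2 * log L) * log L := by
        gcongr
        · exact log_nonneg (le_add_of_nonneg_left (by positivity))
        · exact log_div_log_two_add_one_le hL
    _ = 4 * L ^ θ * log L ^ 2 := by ring
    _ ≤ 4 * L ^ θ * (c / 4 * L ^ (1 - θ)) := by gcongr
    _ = c * (L ^ θ * L ^ (1 - θ)) := by ring
    _ = c * L := by rw [← rpow_add (by linarith)]; norm_num

lemma eventually_exists_wigertBound_le {δ : ℝ} (hδ : 0 < δ) :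
    ∀ᶠ L : ℝ in atTop, ∃ y, 1 < y ∧ wigertBound L y ≤ (δ + log 2) * (L / log L) := by
  have hlog2 : 0 < log 2 := log_pos one_lt_two
  set θ := 2 * log 2 / (2 * log 2 + δ)
  have hθ₀ : 0 < θ := by positivity
  have hθ₁ : θ < 1 := (div_lt_one (by positivity)).2 (by linarith)
  filter_upwards [eventually_rpow_add_one_mul_log_le hθ₀.le hθ₁ (half_pos hδ),
    eventually_gt_atTop 1] with L hsmall hL
  refine ⟨L ^ θ, one_lt_rpow hL hθ₀, ?_⟩
  have hlarge : log 2 * (L / log (L ^ θ)) = (log 2 + δ / 2) * (L / log L) := by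
    have hθ : log 2 / θ = log 2 + δ / 2 := by
      simp only [θ]
      field_simp
    rw [log_rpow (by linarith), ← hθ]
    field_simp
  rw [wigertBound, hlarge]
  linarith

theorem wigert_divisor_bound (δ₀ : ℝ) (hδ₀ : 0 < δ₀) :
    ∃ n₀ : ℕ, ∀ n : ℕ, n₀ ≤ n →
      (n.divisors.card : ℝ) ≤
        (n : ℝ) ^ ((δ₀ + Real.log 2) / Real.log (Real.log (n : ℝ))) := by
  have hlog : Tendsto (fun n : ℕ => log n) atTop atTop :=
    tendsto_log_atTop.comp tendsto_natCast_atTop_atTop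
  obtain ⟨n₀, hn₀⟩ := eventually_atTop.1
    ((hlog.eventually (eventually_exists_wigertBound_le hδ₀)).and (eventually_ne_atTop 0))
  refine ⟨n₀, fun n hn => ?_⟩
  obtain ⟨⟨y, hy, hbound⟩, hn0⟩ := hn₀ n hn
  have hd : 0 < (#n.divisors : ℝ) := by exact_mod_cast card_pos.2 (Nat.nonempty_divisors.2 hn0)
  rw [← exp_log hd, rpow_def_of_pos (by positivity), exp_le_exp]
  calc log (#n.divisors) ≤ wigertBound (log n) y := log_card_divisors_le_wigertBound hn0 hy
    _ ≤ (δ₀ + log 2) * (log n / log (log n)) := hbound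
    _ = log n * ((δ₀ + log 2) / log (log n)) := by ring
end
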